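/- arXiv:1808.01705 — 6 statements merged into one kernel-verified Lean document; each statement's English description precedes it below -/
import Mathlib

section
/- Let G be the group with presentation ⟨σ, τ ∣ τ^(p^m) = σ^(p^(m-k)) = 1, στσ⁻¹ = τ^(p^k+1)⟩ where m ≥ k ≥ 1 are positive integers. Then for every i ≥ 1, the (i+1)-th term of the descending central series of G is the cyclic subgroup generated by τ^(p^(ki)). -/
/-- Relators for the presentation ⟨σ, τ ∣ τ^(p^m) = σ^(p^(m-k)) = 1, στσ⁻¹ = τ^(p^k+1)⟩,
where `true` corresponds to σ and `false` to τ. -/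
def demushkinRels (p m k : ℕ) : Set (FreeGroup Bool) :=
  { FreeGroup.of false ^ p ^ m,
    FreeGroup.of true ^ p ^ (m - k),
    FreeGroup.of true * FreeGroup.of false * (FreeGroup.of true)⁻¹ *
      (FreeGroup.of false ^ (p ^ k + 1))⁻¹ }

/-!
Put `σ = of true`, `τ = of false` and `q = p ^ k`. Conjugation by `σ` maps the finite cyclic group
`⟨τ⟩` into itself, hence onto itself, so `⟨τ⟩` and every `⟨τ ^ n⟩` are normal. Since
`⁅σ, τ⁆ = τ ^ q`, the quotient by `⟨τ ^ q⟩` is generated by two commuting elements, so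
`G' = ⟨τ ^ q⟩`. As `⟨τ⟩` is abelian and normal, `⁅g, τ ^ j⁆ = ⁅g, τ⁆ ^ j`, so commutators with
elements of `⟨τ ^ n⟩` lie in `⟨τ ^ (n q)⟩`, while `⁅σ, τ ^ n⁆ = τ ^ (n q)`. Hence
`⁅⟨τ ^ n⟩, G⁆ = ⟨τ ^ (n q)⟩`, and induction gives `γ_{i+1} = ⟨τ ^ (q ^ i)⟩`.
-/

open Subgroup
open scoped commutatorElement

section General

variable {G : Type*} [Group G]

theorem pow_mem_zpowers_pow {x y : G} (h : x ∈ zpowers y) (n : ℕ) :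
    x ^ n ∈ zpowers (y ^ n) := by
  obtain ⟨c, rfl⟩ := mem_zpowers_iff.mp h
  rw [← zpow_natCast (y ^ c), ← zpow_mul, mul_comm, zpow_mul, zpow_natCast]
  exact zpow_mem_zpowers _ c

theorem commutatorElement_zpow_right_of_conj_mem {g t : G} (h : g * t * g⁻¹ ∈ zpowers t)
    (n : ℤ) : ⁅g, t ^ n⁆ = ⁅g, t⁆ ^ n := by
  obtain ⟨a, ha⟩ := mem_zpowers_iff.mp h
  rw [commutatorElement_def, commutatorElement_def, ← conj_zpow, ← inv_zpow, ← ha,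
    (Commute.zpow_self t a).inv_right.mul_zpow]

theorem commutator_le_of_closure_pair_eq_top {s t : G} (hgen : closure {s, t} = ⊤)
    {N : Subgroup G} [N.Normal] (hst : ⁅s, t⁆ ∈ N) : commutator G ≤ N := by
  rw [← Normal.quotient_commutative_iff_commutator_le]
  have hcomm : Commute (s : G ⧸ N) t := by
    rw [← commutatorElement_eq_one_iff_commute, ← QuotientGroup.coe_mk',
      ← map_commutatorElement, QuotientGroup.coe_mk', QuotientGroup.eq_one_iff]
    exact hst
  have hQ : closure {(s : G ⧸ N), (t : G ⧸ N)} = ⊤ := by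
    rw [← Set.image_pair, ← QuotientGroup.coe_mk', ← MonoidHom.map_closure, hgen,
      map_top_of_surjective _ (QuotientGroup.mk'_surjective N)]
  have := isMulCommutative_closure (k := {(s : G ⧸ N), (t : G ⧸ N)}) (by
    simp only [Set.mem_insert_iff, Set.mem_singleton_iff]
    rintro x (rfl | rfl) y (rfl | rfl) <;> first | rfl | exact hcomm | exact hcomm.symm)
  rw [hQ] at this
  exact ⟨⟨fun x y => congrArg Subtype.val
    (this.is_comm.comm ⟨x, mem_top x⟩ ⟨y, mem_top y⟩)⟩⟩

theorem normal_zpowers_of_conj_mem {s t : G} (hgen : closure {s, t} = ⊤) (ht : IsOfFinOrder t)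
    (hst : s * t * s⁻¹ ∈ zpowers t) : (zpowers t).Normal := by
  rw [← normalizer_eq_top_iff, eq_top_iff, ← hgen, closure_le]
  have : Finite (zpowers t : Set G) := ht.finite_zpowers
  rintro x (rfl | rfl | -)
  · refine mem_normalizer_fintype fun y hy => ?_
    obtain ⟨j, rfl⟩ := mem_zpowers_iff.mp hy
    rw [SetLike.mem_coe, ← conj_zpow]
    exact zpow_mem hst j
  · exact le_normalizer (mem_zpowers t)

theorem Subgroup.Normal.zpowers_pow {t : G} (h : (zpowers t).Normal) (n : ℕ) :
    (zpowers (t ^ n)).Normal := by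
  refine ⟨fun x hx g => ?_⟩
  obtain ⟨j, rfl⟩ := mem_zpowers_iff.mp hx
  rw [← conj_zpow, ← conj_pow]
  exact zpow_mem (pow_mem_zpowers_pow (h.conj_mem t (mem_zpowers t) g) n) j

end General

section ConjugationRelation

variable {G : Type*} [Group G] {s t : G} {q : ℕ}

theorem commutatorElement_eq_pow_of_conj (hconj : s * t * s⁻¹ = t ^ (q + 1)) :
    ⁅s, t⁆ = t ^ q := by
  rw [commutatorElement_def, hconj, pow_succ, mul_inv_cancel_right]

theorem conj_pow_eq_pow_of_conj (hconj : s * t * s⁻¹ = t ^ (q + 1)) (n : ℕ) :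
    s * t ^ n * s⁻¹ = (t ^ n) ^ (q + 1) := by
  rw [← conj_pow, hconj, ← pow_mul, ← pow_mul, mul_comm]

theorem normal_zpowers_of_conj (hgen : closure {s, t} = ⊤) (ht : IsOfFinOrder t)
    (hconj : s * t * s⁻¹ = t ^ (q + 1)) : (zpowers t).Normal :=
  normal_zpowers_of_conj_mem hgen ht (hconj ▸ npow_mem_zpowers t _)

theorem commutator_eq_zpowers_of_conj (hgen : closure {s, t} = ⊤) (ht : IsOfFinOrder t)
    (hconj : s * t * s⁻¹ = t ^ (q + 1)) : commutator G = zpowers (t ^ q) := by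
  have := (normal_zpowers_of_conj hgen ht hconj).zpowers_pow q
  have hst := commutatorElement_eq_pow_of_conj hconj
  refine le_antisymm (commutator_le_of_closure_pair_eq_top hgen (hst ▸ mem_zpowers _)) ?_
  exact zpowers_le.mpr (hst ▸ commutator_mem_commutator (mem_top s) (mem_top t))

theorem commutator_zpowers_pow_top_of_conj (hgen : closure {s, t} = ⊤) (ht : IsOfFinOrder t)
    (hconj : s * t * s⁻¹ = t ^ (q + 1)) (n : ℕ) :
    ⁅zpowers (t ^ n), ⊤⁆ = zpowers (t ^ (n * q)) := by
  apply le_antisymm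
  · rw [commutator_le]
    rintro x hx g -
    obtain ⟨j, rfl⟩ := mem_zpowers_iff.mp hx
    have hgt := (normal_zpowers_of_conj hgen ht hconj).conj_mem t (mem_zpowers t) g
    have hgt_comm : ⁅g, t⁆ ∈ zpowers (t ^ q) :=
      commutator_eq_zpowers_of_conj hgen ht hconj ▸
        commutator_mem_commutator (mem_top g) (mem_top t)
    rw [← commutatorElement_inv, inv_mem_iff, ← zpow_natCast t n, ← zpow_mul,
      commutatorElement_zpow_right_of_conj_mem hgt, zpow_mul, zpow_natCast, mul_comm n q, pow_mul]
    exact zpow_mem (pow_mem_zpowers_pow hgt_comm n) j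
  · rw [zpowers_le, commutator_comm]
    have := commutator_mem_commutator (mem_top s) (mem_zpowers (t ^ n))
    rwa [commutatorElement_eq_pow_of_conj (conj_pow_eq_pow_of_conj hconj n), ← pow_mul] at this

theorem lowerCentralSeries_top_succ_of_conj (hgen : closure {s, t} = ⊤) (ht : IsOfFinOrder t)
    (hconj : s * t * s⁻¹ = t ^ (q + 1)) (i : ℕ) :
    (⊤ : Subgroup G).lowerCentralSeries (i + 1) = zpowers (t ^ q ^ (i + 1)) := by
  induction i with
  | zero =>
    rw [top_lowerCentralSeries_one, zero_add, pow_one, commutator_eq_zpowers_of_conj hgen ht hconj]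
  | succ i ih =>
    rw [Subgroup.lowerCentralSeries_succ, ih, commutator_zpowers_pow_top_of_conj hgen ht hconj,
      ← pow_succ]

end ConjugationRelation

namespace demushkinRels

variable (p m k : ℕ)

theorem of_false_pow :
    (PresentedGroup.of false : PresentedGroup (demushkinRels p m k)) ^ p ^ m = 1 := by
  have h := PresentedGroup.one_of_mem (rels := demushkinRels p m k)
    (x := FreeGroup.of false ^ p ^ m) (by simp [demushkinRels])
  rwa [map_pow] at h

theorem of_true_conj_of_false :
    (PresentedGroup.of true : PresentedGroup (demushkinRels p m k)) * PresentedGroup.of false *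
      (PresentedGroup.of true)⁻¹ = PresentedGroup.of false ^ (p ^ k + 1) := by
  rw [← mul_inv_eq_one]
  have h := PresentedGroup.one_of_mem (rels := demushkinRels p m k)
    (x := FreeGroup.of true * FreeGroup.of false * (FreeGroup.of true)⁻¹ *
      (FreeGroup.of false ^ (p ^ k + 1))⁻¹) (by simp [demushkinRels])
  simp only [map_mul, map_inv, map_pow] at h
  exact h

theorem closure_of_true_of_false :
    closure {PresentedGroup.of true, PresentedGroup.of false} =
      (⊤ : Subgroup (PresentedGroup (demushkinRels p m k))) := by
  rw [← PresentedGroup.closure_range_of]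
  congr 1
  ext
  simp [or_comm]

end demushkinRels

theorem stmt_0_general (p m k : ℕ) (hp : p.Prime) :
    ∀ i : ℕ, 1 ≤ i →
      Subgroup.lowerCentralSeries (⊤ : Subgroup (PresentedGroup (demushkinRels p m k))) i =
        Subgroup.zpowers
          ((PresentedGroup.of false : PresentedGroup (demushkinRels p m k)) ^ p ^ (k * i)) := by
  intro i hi
  obtain ⟨i, rfl⟩ := Nat.exists_eq_add_of_le' hi
  have ht : IsOfFinOrder (PresentedGroup.of false : PresentedGroup (demushkinRels p m k)) :=
    isOfFinOrder_iff_pow_eq_one.mpr ⟨p ^ m, pow_pos hp.pos m, demushkinRels.of_false_pow p m k⟩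
  rw [pow_mul]
  exact lowerCentralSeries_top_succ_of_conj (demushkinRels.closure_of_true_of_false p m k) ht
    (demushkinRels.of_true_conj_of_false p m k) i

theorem stmt_0 (p m k : ℕ) (hp : p.Prime) (hk : 1 ≤ k) (hmk : k ≤ m) :
    ∀ i : ℕ, 1 ≤ i →
      Subgroup.lowerCentralSeries (⊤ : Subgroup (PresentedGroup (demushkinRels p m k))) i =
        Subgroup.zpowers
          ((PresentedGroup.of false : PresentedGroup (demushkinRels p m k)) ^ p ^ (k * i)) :=
  stmt_0_general p m k hp
end

section
/- Let p be a prime and k, m positive integers with m ≥ k, and k ≥ 2 if p = 2. The group G = ⟨σ, τ ∣ τ^(p^m) = σ^(p^(m-k)) = 1, στσ⁻¹ = τ^(p^k+1)⟩ has exponent p^m. -/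
/-!
Since `σ τ σ⁻¹ = τ ^ u` with `u = p ^ k + 1`, every element of the group is `τ ^ a * σ ^ b`, and
`(τ ^ a * σ ^ b) ^ n = τ ^ (a * ∑ i < n, w ^ i) * σ ^ (b * n)` with `w = u ^ b ≡ 1 [MOD p]`.
A geometric sum of `p ^ m` terms whose ratio is `≡ 1 [MOD p]` is divisible by `p ^ m`, so every
element is killed by `p ^ m`. Conversely `τ ↦ (x ↦ x + 1)`, `σ ↦ (x ↦ u * x)` is an action on
`ZMod (p ^ m)` in which `τ` has order `p ^ m`; the same divisibility shows `u ^ p ^ (m - k) = 1`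
there.
-/

open Finset

theorem geom_sum_range_mul {R : Type*} [Semiring R] (x : R) (M N : ℕ) :
    ∑ i ∈ range (N * M), x ^ i = (∑ i ∈ range N, (x ^ M) ^ i) * ∑ j ∈ range M, x ^ j := by
  induction N with
  | zero => simp
  | succ N ih =>
    rw [Nat.succ_mul, sum_range_add, ih, sum_range_succ, add_mul, ← pow_mul]
    congr 1
    rw [mul_sum]
    exact sum_congr rfl fun j _ => by rw [← pow_add, mul_comm M N]

section CommRing

variable {R : Type*} [CommRing R]

theorem pow_dvd_geom_sum_of_dvd_sub_one {p : ℕ} {x : R} (h : (p : R) ∣ x - 1) (j : ℕ) :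
    (p : R) ^ j ∣ ∑ i ∈ range (p ^ j), x ^ i := by
  induction j with
  | zero => simp
  | succ j ih =>
    have hpj : (p : R) ∣ x ^ p ^ j - 1 := h.trans (sub_one_dvd_pow_sub_one x _)
    rw [pow_succ' p, geom_sum_range_mul, pow_succ']
    exact mul_dvd_mul (by simpa using dvd_geom_sum₂_self hpj) ih

theorem pow_add_dvd_pow_pow_sub_one {p k : ℕ} {x : R} (hk : k ≠ 0) (h : (p : R) ^ k ∣ x - 1)
    (j : ℕ) : (p : R) ^ (k + j) ∣ x ^ p ^ j - 1 := by
  rw [← mul_geom_sum, pow_add]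
  exact mul_dvd_mul h (pow_dvd_geom_sum_of_dvd_sub_one ((dvd_pow_self _ hk).trans h) j)

end CommRing

namespace ZMod

variable {p m : ℕ}

theorem geom_sum_range_pow_eq_zero {w : ZMod (p ^ m)} (hw : (p : ZMod (p ^ m)) ∣ w - 1) :
    ∑ i ∈ range (p ^ m), w ^ i = 0 := by
  simpa [← Nat.cast_pow] using pow_dvd_geom_sum_of_dvd_sub_one hw m

theorem pow_add_one_pow_pow_sub_eq_one {k : ℕ} (hk : k ≠ 0) :
    ((p : ZMod (p ^ m)) ^ k + 1) ^ p ^ (m - k) = 1 := by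
  have hpm : (p : ZMod (p ^ m)) ^ m = 0 := by rw [← Nat.cast_pow, natCast_self]
  have h := pow_add_dvd_pow_pow_sub_one hk (p := p) (x := (p : ZMod (p ^ m)) ^ k + 1)
    (by simp) (m - k)
  rwa [pow_eq_zero_of_le (by omega) hpm, zero_dvd_iff, sub_eq_zero] at h

end ZMod

section Conjugation

variable {H : Type*} [Group H] {s t : H} {u : ℕ}

theorem pow_mul_pow_eq_of_conj_eq (h : s * t * s⁻¹ = t ^ u) (j c : ℕ) :
    s ^ j * t ^ c = t ^ (c * u ^ j) * s ^ j := by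
  induction j with
  | zero => simp
  | succ j ih =>
    have hs : s * t ^ (c * u ^ j) = t ^ (c * u ^ (j + 1)) * s := by
      rw [← mul_inv_eq_iff_eq_mul, ← conj_pow, h, ← pow_mul, pow_succ]
      ring_nf
    rw [pow_succ', mul_assoc, ih, ← mul_assoc, hs, mul_assoc, ← pow_succ']

theorem pow_mul_pow_pow_of_conj_eq (h : s * t * s⁻¹ = t ^ u) (a b n : ℕ) :
    (t ^ a * s ^ b) ^ n = t ^ (a * ∑ i ∈ range n, (u ^ b) ^ i) * s ^ (b * n) := by
  induction n with
  | zero => simp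
  | succ n ih =>
    rw [pow_succ, ih, mul_assoc, ← mul_assoc (s ^ (b * n)), pow_mul_pow_eq_of_conj_eq h,
      sum_range_succ, mul_add, pow_add, pow_mul u b n]
    group

theorem exists_eq_pow_mul_pow_of_conj_eq (h : s * t * s⁻¹ = t ^ u) (hs : IsOfFinOrder s)
    (ht : IsOfFinOrder t) {x : H} (hx : x ∈ Subgroup.closure {s, t}) :
    ∃ a b : ℕ, x = t ^ a * s ^ b := by
  rw [← Subgroup.mem_toSubmonoid,
    Subgroup.closure_toSubmonoid_of_isOfFinOrder (by simp [hs, ht])] at hx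
  induction hx using Submonoid.closure_induction_left with
  | one => exact ⟨0, 0, by simp⟩
  | mul_left y hy z _ ih =>
    obtain ⟨a, b, rfl⟩ := ih
    rcases hy with rfl | rfl
    · refine ⟨a * u, b + 1, ?_⟩
      rw [← mul_assoc, ← pow_one y, pow_mul_pow_eq_of_conj_eq h, pow_one, pow_one, mul_assoc,
        ← pow_succ']
    · exact ⟨a + 1, b, by rw [← mul_assoc, pow_succ']⟩

end Conjugation

section Demushkin

variable {p m k : ℕ}

theorem demushkin_tau_pow :
    (PresentedGroup.of false : PresentedGroup (demushkinRels p m k)) ^ p ^ m = 1 := by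
  have h := PresentedGroup.one_of_mem (rels := demushkinRels p m k)
    (x := FreeGroup.of false ^ p ^ m) (by simp [demushkinRels])
  rwa [map_pow] at h

theorem demushkin_sigma_pow :
    (PresentedGroup.of true : PresentedGroup (demushkinRels p m k)) ^ p ^ (m - k) = 1 := by
  have h := PresentedGroup.one_of_mem (rels := demushkinRels p m k)
    (x := FreeGroup.of true ^ p ^ (m - k)) (by simp [demushkinRels])
  rwa [map_pow] at h

theorem demushkin_conj :
    (PresentedGroup.of true : PresentedGroup (demushkinRels p m k)) * PresentedGroup.of false *
      (PresentedGroup.of true)⁻¹ = PresentedGroup.of false ^ (p ^ k + 1) := by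
  have h := PresentedGroup.one_of_mem (rels := demushkinRels p m k)
    (x := FreeGroup.of true * FreeGroup.of false * (FreeGroup.of true)⁻¹ *
      (FreeGroup.of false ^ (p ^ k + 1))⁻¹) (by simp [demushkinRels])
  rwa [map_mul, map_mul, map_mul, map_inv, map_inv, map_pow, mul_inv_eq_one] at h

theorem demushkin_pow_eq_one (hp : p ≠ 0) (hk : k ≠ 0)
    (x : PresentedGroup (demushkinRels p m k)) : x ^ p ^ m = 1 := by
  have hfin {y : PresentedGroup (demushkinRels p m k)} {n : ℕ} (hy : y ^ p ^ n = 1) :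
      IsOfFinOrder y :=
    isOfFinOrder_iff_pow_eq_one.mpr ⟨_, pow_pos (Nat.pos_of_ne_zero hp) n, hy⟩
  have hx : x ∈ Subgroup.closure {PresentedGroup.of true, PresentedGroup.of false} :=
    PresentedGroup.generated_by _ _ (fun b => Subgroup.subset_closure (by cases b <;> simp)) x
  obtain ⟨a, b, rfl⟩ := exists_eq_pow_mul_pow_of_conj_eq demushkin_conj
    (hfin demushkin_sigma_pow) (hfin demushkin_tau_pow) hx
  rw [pow_mul_pow_pow_of_conj_eq demushkin_conj]
  have hw : (p : ZMod (p ^ m)) ∣ ((p : ZMod (p ^ m)) ^ k + 1) ^ b - 1 := (dvd_pow_self _ hk).trans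
    (by simpa using sub_one_dvd_pow_sub_one ((p : ZMod (p ^ m)) ^ k + 1) b)
  obtain ⟨c, hc⟩ : p ^ m ∣ a * ∑ i ∈ range (p ^ m), ((p ^ k + 1) ^ b) ^ i :=
    Dvd.dvd.mul_left ((ZMod.natCast_eq_zero_iff _ _).mp
      (by push_cast; exact ZMod.geom_sum_range_pow_eq_zero hw)) a
  obtain ⟨d, hd⟩ : p ^ (m - k) ∣ b * p ^ m := (Nat.pow_dvd_pow p (m.sub_le k)).mul_left b
  rw [hc, hd, pow_mul, pow_mul, demushkin_tau_pow, demushkin_sigma_pow, one_pow, one_pow,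
    one_mul]

variable (m) in
def demushkinUnit (hp : p ≠ 0) (hk : k ≠ 0) : (ZMod (p ^ m))ˣ :=
  Units.ofPowEqOne _ (p ^ (m - k)) (ZMod.pow_add_one_pow_pow_sub_eq_one hk) (pow_ne_zero _ hp)

theorem demushkinPerm_rels (hp : p ≠ 0) (hk : k ≠ 0) : ∀ r ∈ demushkinRels p m k,
    FreeGroup.lift (fun b => bif b then MulAction.toPerm (demushkinUnit m hp hk)
      else Equiv.addLeft (1 : ZMod (p ^ m))) r = 1 := by
  intro r hr
  simp only [demushkinRels, Set.mem_insert_iff, Set.mem_singleton_iff] at hr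
  rcases hr with rfl | rfl | rfl
  · ext x; simp
  · rw [map_pow, FreeGroup.lift_apply_of, cond_true, ← MulAction.toPermHom_apply, ← map_pow,
      demushkinUnit, Units.pow_ofPowEqOne, map_one]
  · rw [map_mul, map_mul, map_mul, map_inv, map_inv, map_pow, FreeGroup.lift_apply_of,
      FreeGroup.lift_apply_of, cond_true, cond_false, mul_inv_eq_one, mul_inv_eq_iff_eq_mul,
      Equiv.nsmul_addLeft]
    ext x
    simp only [Equiv.Perm.mul_apply, MulAction.toPerm_apply, Equiv.coe_addLeft, Units.smul_def,
      demushkinUnit, Units.val_ofPowEqOne, nsmul_eq_mul]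
    push_cast
    ring

def demushkinPerm (hp : p ≠ 0) (hk : k ≠ 0) :
    PresentedGroup (demushkinRels p m k) →* Equiv.Perm (ZMod (p ^ m)) :=
  PresentedGroup.toGroup (demushkinPerm_rels hp hk)

theorem dvd_exponent_demushkin (hp : p ≠ 0) (hk : k ≠ 0) :
    p ^ m ∣ Monoid.exponent (PresentedGroup (demushkinRels p m k)) := by
  have h := congrArg (fun g => demushkinPerm hp hk g 0)
    (Monoid.pow_exponent_eq_one (PresentedGroup.of false : PresentedGroup (demushkinRels p m k)))
  simpa [demushkinPerm, ZMod.natCast_eq_zero_iff] using h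

end Demushkin

theorem stmt_2_general (p m k : ℕ) (hp : p.Prime) (hk : 1 ≤ k) :
    Monoid.exponent (PresentedGroup (demushkinRels p m k)) = p ^ m :=
  Nat.dvd_antisymm
    (Monoid.exponent_dvd_of_forall_pow_eq_one (demushkin_pow_eq_one hp.ne_zero (by omega)))
    (dvd_exponent_demushkin hp.ne_zero (by omega))

theorem stmt_2 (p m k : ℕ) (hp : p.Prime) (hk : 1 ≤ k) (hmk : k ≤ m)
    (hk2 : p = 2 → 2 ≤ k) :
    Monoid.exponent (PresentedGroup (demushkinRels p m k)) = p ^ m :=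
  stmt_2_general p m k hp hk
end

section
/- Let p be a prime and k a positive integer. In the group U_{k+2}(ℤ/pℤ) of (k+2)×(k+2) upper-triangular unipotent matrices over ℤ/pℤ, set X = I + E_{1,2} + E_{2,3} + ⋯ + E_{k,k+1} and Y = I + E_{k+1,k+2}. Then for every 0 ≤ i ≤ k, the iterated commutator [X^{(i)}, Y] equals I + E_{k+1−i, k+2}. -/
/-!
Write `X = 1 + N` with `N = ∑_{1 ≤ j ≤ k} E_{j,j+1}`, and `E_a = E_{a,k+2}`. Since the last
row of `N` vanishes, `E_a N = 0`, while `N E_{a+1} = E_a`; hence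
`X (1 + E_{a+1}) = (1 + E_{a+1} + E_a) X`. As `E_{a+1}` squares to zero and `E_a E_{a+1} = 0`,
this gives `[X, 1 + E_{a+1}] = (1 + E_{a+1} + E_a)(1 - E_{a+1}) = 1 + E_a`: each commutator
with `X` moves the off-diagonal entry one row up.
-/

/-- Iterated commutator: `iterComm A B 0 = B`, `iterComm A B (i+1) = [A, iterComm A B i]`
where `[a,b] = a * b * a⁻¹ * b⁻¹`. -/
def iterComm {M : Type*} [Mul M] [Inv M] (A B : M) : ℕ → M
  | 0 => B
  | n + 1 => A * iterComm A B n * A⁻¹ * (iterComm A B n)⁻¹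

open Matrix

section

variable {n R : Type*} [Fintype n] [DecidableEq n] [CommRing R]

theorem Matrix.isUnit_det_one_add_of_apply_eq_zero_of_le [LinearOrder n] {N : Matrix n n R}
    (hN : ∀ i j, j ≤ i → N i j = 0) : IsUnit (1 + N).det := by
  have hupper : (1 + N).IsUpperTriangular := fun i j (hji : j < i) => by
    rw [add_apply, one_apply_ne hji.ne', hN i j hji.le, add_zero]
  rw [det_of_isUpperTriangular hupper]
  simp [hN]

theorem Matrix.commutator_one_add_eq_one_add {X E F : Matrix n n R} (hX : IsUnit X.det)
    (hXE : X * (1 + E) = (1 + E + F) * X) (hEE : E * E = 0) (hFE : F * E = 0) :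
    X * (1 + E) * X⁻¹ * (1 + E)⁻¹ = 1 + F := by
  have hinv : (1 + E)⁻¹ = 1 - E :=
    inv_eq_right_inv (by rw [mul_sub, mul_one, add_mul, one_mul, hEE]; abel)
  calc X * (1 + E) * X⁻¹ * (1 + E)⁻¹ = (1 + E + F) * (X * X⁻¹) * (1 - E) := by
        rw [hXE, hinv, mul_assoc (1 + E + F)]
    _ = 1 + F := by
        simp only [mul_nonsing_inv _ hX, mul_one, mul_sub, add_mul, one_mul, hEE, hFE]
        abel

end

section NilpotentShift

variable (R : Type*) [CommRing R] (k : ℕ)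

def nilpotentShift : Matrix (Fin (k + 2)) (Fin (k + 2)) R :=
  ∑ j : Fin k,
    single (j.castLE (Nat.le_add_right k 2)) (j.succ.castLE (Nat.le_add_right (k + 1) 1)) 1

variable {R k}

theorem nilpotentShift_apply_of_le {i j : Fin (k + 2)} (hji : j ≤ i) :
    nilpotentShift R k i j = 0 := by
  rw [nilpotentShift, Matrix.sum_apply]
  refine Finset.sum_eq_zero fun m _ => ?_
  rw [single_apply, if_neg]
  rintro ⟨rfl, rfl⟩
  rw [Fin.le_def, Fin.val_castLE, Fin.val_castLE, Fin.val_succ] at hji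
  omega

theorem isUnit_det_one_add_nilpotentShift : IsUnit (1 + nilpotentShift R k).det :=
  isUnit_det_one_add_of_apply_eq_zero_of_le fun _ _ => nilpotentShift_apply_of_le

theorem single_last_mul_nilpotentShift (a : Fin (k + 2)) (c : R) :
    single a (Fin.last (k + 1)) c * nilpotentShift R k = 0 := by
  rw [nilpotentShift, Finset.mul_sum]
  refine Finset.sum_eq_zero fun j _ => single_mul_single_of_ne _ _ _ _ ?_ _
  rw [Ne, Fin.ext_iff, Fin.val_last, Fin.val_castLE]
  omega

theorem nilpotentShift_mul_single_last (b : Fin k) (c : R) :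
    nilpotentShift R k * single (b.succ.castLE (Nat.le_add_right (k + 1) 1)) (Fin.last (k + 1)) c =
      single (b.castLE (Nat.le_add_right k 2)) (Fin.last (k + 1)) c := by
  rw [nilpotentShift, Finset.sum_mul, Finset.sum_eq_single b]
  · rw [single_mul_single_same, one_mul]
  · intro j _ hjb
    refine single_mul_single_of_ne _ _ _ _ ?_ _
    rwa [Ne, Fin.castLE_inj, Fin.succ_inj]
  · simp

theorem commutator_one_add_nilpotentShift_one_add_single_last (b : Fin k) :
    (1 + nilpotentShift R k) *
        (1 + single (b.succ.castLE (Nat.le_add_right (k + 1) 1)) (Fin.last (k + 1)) 1) *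
        (1 + nilpotentShift R k)⁻¹ *
        (1 + single (b.succ.castLE (Nat.le_add_right (k + 1) 1)) (Fin.last (k + 1)) 1)⁻¹ =
      1 + single (b.castLE (Nat.le_add_right k 2)) (Fin.last (k + 1)) 1 := by
  have hne : Fin.last (k + 1) ≠ b.succ.castLE (Nat.le_add_right (k + 1) 1) := by
    rw [Ne, Fin.ext_iff, Fin.val_last, Fin.val_castLE, Fin.val_succ]
    omega
  refine commutator_one_add_eq_one_add isUnit_det_one_add_nilpotentShift ?_
    (single_mul_single_of_ne _ _ _ _ hne _) (single_mul_single_of_ne _ _ _ _ hne _)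
  simp only [mul_add, add_mul, mul_one, one_mul, nilpotentShift_mul_single_last,
    single_last_mul_nilpotentShift]
  abel

end NilpotentShift

theorem stmt_6 (p k : ℕ) :
    ∀ i : ℕ, i ≤ k →
      iterComm
        (1 + ∑ j : Fin k,
          Matrix.single (j.castLE (by omega)) (j.succ.castLE (by omega))
            (1 : ZMod p) : Matrix (Fin (k + 2)) (Fin (k + 2)) (ZMod p))
        (1 + Matrix.single (⟨k, by omega⟩ : Fin (k + 2)) ⟨k + 1, by omega⟩ (1 : ZMod p))
        i
      = 1 + Matrix.single (⟨k - i, by omega⟩ : Fin (k + 2)) ⟨k + 1, by omega⟩ 1 := by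
  intro i hi
  induction i with
  | zero => rfl
  | succ i ih =>
    let b : Fin k := ⟨k - (i + 1), by omega⟩
    have hb : (⟨k - i, by omega⟩ : Fin (k + 2)) = b.succ.castLE (by omega) :=
      Fin.ext (show k - i = k - (i + 1) + 1 by omega)
    rw [iterComm, ih (by omega), hb]
    exact commutator_one_add_nilpotentShift_one_add_single_last b
end

section
/- Let F be a field of characteristic ≠ p with ζ_{p^k} ∈ F, ζ_{p^{k+1}} ∉ F (and ζ₄ ∈ F if p = 2), and let a ∈ F^× be such that the class of a in F^×/(F^×)^p does not lie in the subgroup generated by the class of ζ_{p^k}. Then for every m ≥ k, a is not a p-th power in F(ζ_{p^m}); moreover if p = 2 then a ∉ −4·F(ζ_{2^m})^4. -/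
/-!
`K = F(ζ_{p^m})` is Galois over `F`, and sending `σ` to the exponent `c` with `σ ζ = ζ ^ c`
embeds `Gal(K/F)` into the units of `ZMod (p ^ m)` that are `1` modulo `p ^ k`, because `F`
already contains the `p ^ k`-th roots of unity. That group is cyclic, generated by `1 + p ^ k`
(this needs `p` odd or `k ≥ 2`). Let `σ` generate `Gal(K/F)` and let `ξ ∈ K \ F` be a
primitive `p ^ (k + 1)`-th root of unity, so that `σ ξ / ξ` is a primitive `p`-th root of unity.
If `a = y ^ p` with `y ∈ K`, then `σ y / y` is a `p`-th root of unity, say `(σ ξ / ξ) ^ d`; so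
`y / ξ ^ d` is fixed by `σ`, lies in `F`, and `a = (y / ξ ^ d) ^ p * (ξ ^ p) ^ d` with `ξ ^ p` a
power of `ζ_{p^k}`.
For `p = 2`, `-4 y ^ 4 = ((1 + i) y) ^ 4` with `i = ζ_4 ∈ F` reduces the second claim to the first.
-/

namespace ZMod

theorem card_ker_unitsMap_prime_pow {p : ℕ} (hp : p.Prime) {k m : ℕ} (hk : k ≠ 0)
    (hkm : k ≤ m) : Nat.card (unitsMap (pow_dvd_pow p hkm)).ker = p ^ (m - k) := by
  have : NeZero (p ^ m) := ⟨pow_ne_zero _ hp.ne_zero⟩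
  have : NeZero (p ^ k) := ⟨pow_ne_zero _ hp.ne_zero⟩
  have hcard := (unitsMap (pow_dvd_pow p hkm)).ker.card_mul_index
  rw [Subgroup.index_ker, MonoidHom.range_eq_top.mpr (unitsMap_surjective _), Subgroup.card_top,
    Nat.card_eq_fintype_card (α := (ZMod (p ^ k))ˣ),
    Nat.card_eq_fintype_card (α := (ZMod (p ^ m))ˣ),
    card_units_eq_totient, card_units_eq_totient, Nat.totient_prime_pow hp (by omega),
    Nat.totient_prime_pow hp (by omega)] at hcard
  have hpos : 0 < p ^ (k - 1) * (p - 1) :=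
    Nat.mul_pos (pow_pos hp.pos _) (by have := hp.two_le; omega)
  apply Nat.eq_of_mul_eq_mul_right hpos
  rw [hcard, ← mul_assoc, ← pow_add]
  congr 2
  omega

theorem isCyclic_ker_unitsMap_prime_pow {p : ℕ} (hp : p.Prime) {k m : ℕ} (hk : k ≠ 0)
    (hpk : k + 2 ≤ p * k) (hkm : k ≤ m) : IsCyclic (unitsMap (pow_dvd_pow p hkm)).ker := by
  obtain ⟨n, rfl⟩ := Nat.exists_eq_add_of_le' hkm
  have horder : orderOf (1 + p ^ k : ZMod (p ^ (n + k))) = p ^ n := by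
    simpa using orderOf_one_add_mul_prime_pow hp k hk hpk 1 (by norm_cast; exact hp.not_dvd_one) n
  have hunit : IsUnit (1 + p ^ k : ZMod (p ^ (n + k))) :=
    (isOfFinOrder_iff_pow_eq_one.mpr ⟨_, pow_pos hp.pos n, horder ▸ pow_orderOf_eq_one _⟩).isUnit
  have hker : hunit.unit ∈ (unitsMap (pow_dvd_pow p hkm)).ker := by
    ext
    rw [unitsMap_val, IsUnit.unit_spec, Units.val_one, ← castHom_apply (h := pow_dvd_pow p hkm),
      map_add, map_one, map_pow, map_natCast, ← Nat.cast_pow, natCast_self, add_zero]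
  refine isCyclic_of_orderOf_eq_card ⟨hunit.unit, hker⟩ ?_
  rw [card_ker_unitsMap_prime_pow hp hk hkm, Subgroup.orderOf_mk, ← orderOf_units,
    IsUnit.unit_spec, horder, Nat.add_sub_cancel]

end ZMod

section

variable {F K : Type*} [Field F] [Field K] [Algebra F K]

theorem IsPrimitiveRoot.isCyclotomicExtension_of_adjoin_eq_top {n : ℕ} [NeZero n] {ζ : K}
    (hζ : IsPrimitiveRoot ζ n) (hadj : IntermediateField.adjoin F {ζ} = ⊤) :
    IsCyclotomicExtension {n} F K := by
  have hint : IsIntegral F ζ := (hζ.isIntegral (NeZero.pos n)).tower_top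
  have htop : Algebra.adjoin F {ζ} = ⊤ := by
    rw [← IntermediateField.adjoin_simple_toSubalgebra_of_isAlgebraic hint.isAlgebraic, hadj,
      IntermediateField.top_toSubalgebra]
  refine (IsCyclotomicExtension.iff_singleton n F K).mpr ⟨⟨ζ, hζ⟩, fun x => ?_⟩
  refine Algebra.adjoin_mono ?_ (htop ▸ Algebra.mem_top : x ∈ Algebra.adjoin F {ζ})
  simpa using hζ.pow_eq_one

theorem IsPrimitiveRoot.isCyclic_algEquiv_of_prime_pow {p k m : ℕ} (hp : p.Prime) (hk : k ≠ 0)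
    (hpk : k + 2 ≤ p * k) (hkm : k ≤ m) {ζk : F} (hζk : IsPrimitiveRoot ζk (p ^ k)) {ζ : K}
    (hζ : IsPrimitiveRoot ζ (p ^ m)) (hadj : IntermediateField.adjoin F {ζ} = ⊤) :
    IsCyclic (K ≃ₐ[F] K) := by
  have : NeZero (p ^ m) := ⟨pow_ne_zero _ hp.ne_zero⟩
  have : NeZero (p ^ k) := ⟨pow_ne_zero _ hp.ne_zero⟩
  have := hζ.isCyclotomicExtension_of_adjoin_eq_top hadj
  have := ZMod.isCyclic_ker_unitsMap_prime_pow hp hk hpk hkm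
  have hμ : IsPrimitiveRoot (ζ ^ p ^ (m - k)) (p ^ k) :=
    hζ.pow (pow_pos hp.pos m) (by rw [← pow_add, Nat.sub_add_cancel hkm])
  obtain ⟨j, -, hj⟩ := (hζk.map_of_injective (algebraMap F K).injective).eq_pow_of_pow_eq_one
    hμ.pow_eq_one
  have hker (σ : K ≃ₐ[F] K) : hζ.autToPow F σ ∈ (ZMod.unitsMap (pow_dvd_pow p hkm)).ker := by
    have hfix : σ (ζ ^ p ^ (m - k)) = ζ ^ p ^ (m - k) := by
      rw [← hj, ← map_pow, AlgEquiv.commutes]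
    have hmod : (hζ.autToPow F σ : ZMod (p ^ m)).val ≡ 1 [MOD p ^ k] := by
      rw [hμ.eq_orderOf, ← (hμ.isOfFinOrder (NeZero.ne _)).pow_eq_pow_iff_modEq, pow_one,
        ← pow_mul, mul_comm, pow_mul, IsPrimitiveRoot.autToPow_spec F hζ σ, ← map_pow, hfix]
    ext
    rw [ZMod.unitsMap_val, ZMod.cast_eq_val, Units.val_one, ← Nat.cast_one,
      ZMod.natCast_eq_natCast_iff]
    exact hmod
  exact isCyclic_of_injective ((hζ.autToPow F).codRestrict _ hker)
    fun σ τ h => hζ.autToPow_injective F (congrArg Subtype.val h)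

theorem IsGalois.exists_algEquiv_fixed_mem_bot [FiniteDimensional F K] [IsGalois F K]
    [IsCyclic (K ≃ₐ[F] K)] :
    ∃ σ : K ≃ₐ[F] K, ∀ x, σ x = x → x ∈ (⊥ : IntermediateField F K) := by
  obtain ⟨σ, hσ⟩ := IsCyclic.exists_generator (α := K ≃ₐ[F] K)
  refine ⟨σ, fun x hx => (IsGalois.mem_bot_iff_fixed x).mpr fun τ => ?_⟩
  have : σ ∈ MulAction.stabilizer (K ≃ₐ[F] K) x := hx
  exact Subgroup.zpowers_le.mpr this (hσ τ)

theorem exists_div_pow_mem_bot_of_pow_mem_bot {p : ℕ} (hp : p.Prime) {σ : K ≃ₐ[F] K}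
    (hσ : ∀ x, σ x = x → x ∈ (⊥ : IntermediateField F K)) {ξ y : K}
    (hξ : ξ ∉ (⊥ : IntermediateField F K)) (hξp : ξ ^ p ∈ (⊥ : IntermediateField F K))
    (hyp : y ^ p ∈ (⊥ : IntermediateField F K)) :
    ∃ d : ℕ, y / ξ ^ d ∈ (⊥ : IntermediateField F K) := by
  have hfix {x : K} (hx : x ∈ (⊥ : IntermediateField F K)) : σ x = x := by
    obtain ⟨r, rfl⟩ := IntermediateField.mem_bot.mp hx
    exact σ.commutes r
  have hξ0 : ξ ≠ 0 := fun h => hξ (h ▸ zero_mem _)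
  rcases eq_or_ne y 0 with rfl | hy0
  · exact ⟨0, by simp⟩
  have : Fact p.Prime := ⟨hp⟩
  have hω : IsPrimitiveRoot (σ ξ / ξ) p := by
    refine IsPrimitiveRoot.iff_orderOf.mpr (orderOf_eq_prime ?_ ?_)
    · rw [div_pow, ← map_pow, hfix hξp, div_self (pow_ne_zero _ hξ0)]
    · exact fun h => hξ (hσ ξ ((div_eq_one_iff_eq hξ0).mp h))
  have hη : (σ y / y) ^ p = 1 := by
    rw [div_pow, ← map_pow, hfix hyp, div_self (pow_ne_zero _ hy0)]
  obtain ⟨d, -, hd⟩ := hω.eq_pow_of_pow_eq_one hη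
  have hσy : σ y = (σ ξ / ξ) ^ d * y := by rw [hd, div_mul_cancel₀ _ hy0]
  have hσξ : σ ξ ≠ 0 := (map_ne_zero σ).mpr hξ0
  refine ⟨d, hσ _ ?_⟩
  rw [map_div₀, map_pow, hσy, div_pow]
  field_simp

theorem IsPrimitiveRoot.exists_pow_eq_algebraMap_pow_mul_pow {p k m : ℕ} (hp : p.Prime)
    (hk : k ≠ 0) (hpk : k + 2 ≤ p * k) (hkm : k ≤ m) {ζk : F} (hζk : IsPrimitiveRoot ζk (p ^ k))
    (hnok1 : ¬ ∃ ζ : F, IsPrimitiveRoot ζ (p ^ (k + 1))) {ζ : K} (hζ : IsPrimitiveRoot ζ (p ^ m))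
    (hadj : IntermediateField.adjoin F {ζ} = ⊤) {y : K}
    (hy : y ^ p ∈ (⊥ : IntermediateField F K)) :
    ∃ z : F, ∃ b : ℕ, y ^ p = algebraMap F K (z ^ p * ζk ^ b) := by
  have hζk' := hζk.map_of_injective (algebraMap F K).injective
  have mem_bot_of_pow_primitive {x : K} (hx : IsPrimitiveRoot x (p ^ k)) :
      x ∈ (⊥ : IntermediateField F K) := by
    have : NeZero (p ^ k) := ⟨pow_ne_zero _ hp.ne_zero⟩
    obtain ⟨j, -, hj⟩ := hζk'.eq_pow_of_pow_eq_one hx.pow_eq_one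
    exact hj ▸ IntermediateField.mem_bot.mpr ⟨ζk ^ j, map_pow _ _ _⟩
  obtain ⟨n, rfl⟩ := Nat.exists_eq_add_of_le hkm
  rcases n with _ | n
  · have htop : (⊤ : IntermediateField F K) = ⊥ := by
      rw [← hadj, IntermediateField.adjoin_simple_eq_bot_iff]
      exact mem_bot_of_pow_primitive hζ
    obtain ⟨z, hz⟩ := IntermediateField.mem_bot.mp (htop ▸ IntermediateField.mem_top : y ∈ _)
    exact ⟨z, 0, by rw [pow_zero, mul_one, map_pow, hz]⟩
  have : NeZero (p ^ (k + (n + 1))) := ⟨pow_ne_zero _ hp.ne_zero⟩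
  have := hζ.isCyclotomicExtension_of_adjoin_eq_top hadj
  have := IsCyclotomicExtension.finiteDimensional {p ^ (k + (n + 1))} F K
  have := IsCyclotomicExtension.isGalois {p ^ (k + (n + 1))} F K
  have := hζk.isCyclic_algEquiv_of_prime_pow hp hk hpk hkm hζ hadj
  obtain ⟨σ, hσ⟩ := IsGalois.exists_algEquiv_fixed_mem_bot (F := F) (K := K)
  have hξ : IsPrimitiveRoot (ζ ^ p ^ n) (p ^ (k + 1)) :=
    hζ.pow (pow_pos hp.pos _) (by rw [← pow_add]; ring_nf)
  set ξ := ζ ^ p ^ n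
  have hξ_not_mem : ξ ∉ (⊥ : IntermediateField F K) := fun h => by
    obtain ⟨x, hx⟩ := IntermediateField.mem_bot.mp h
    exact hnok1 ⟨x, (hx ▸ hξ).of_map_of_injective (algebraMap F K).injective⟩
  have hξp : IsPrimitiveRoot (ξ ^ p) (p ^ k) :=
    hξ.pow (pow_pos hp.pos _) (pow_succ' _ _)
  obtain ⟨d, hd⟩ := exists_div_pow_mem_bot_of_pow_mem_bot hp hσ hξ_not_mem
    (mem_bot_of_pow_primitive hξp) hy
  obtain ⟨z, hz⟩ := IntermediateField.mem_bot.mp hd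
  have : NeZero (p ^ k) := ⟨pow_ne_zero _ hp.ne_zero⟩
  obtain ⟨j, -, hj⟩ := hζk'.eq_pow_of_pow_eq_one hξp.pow_eq_one
  refine ⟨z, j * d, ?_⟩
  have hξ0 : ξ ≠ 0 := hξ.ne_zero (pow_ne_zero _ hp.ne_zero)
  rw [map_mul, map_pow, map_pow, hz, pow_mul, hj, div_pow, pow_right_comm,
    div_mul_cancel₀ _ (pow_ne_zero _ (pow_ne_zero _ hξ0))]

end

theorem neg_four_mul_pow_four_eq_sq_sq {R : Type*} [CommRing R] {i : R} (hi : i ^ 2 = -1)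
    (y : R) : -4 * y ^ 4 = (((1 + i) * y) ^ 2) ^ 2 := by
  linear_combination (-(y ^ 4) * (i ^ 2 + 4 * i + 5)) * hi

theorem stmt_11_general (p k : ℕ) (hp : p.Prime) (hk : 1 ≤ k)
    (F : Type*) [Field F] (hk2 : p = 2 → 2 ≤ k)
    (ζk : F) (hζk : IsPrimitiveRoot ζk (p ^ k))
    (hnok1 : ¬ ∃ ζ : F, IsPrimitiveRoot ζ (p ^ (k + 1)))
    (a : F)
    (hna : ∀ (f : F) (b : ℤ), a ≠ f ^ p * ζk ^ b)
    (m : ℕ) (hm : k ≤ m)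
    (K : Type*) [Field K] [Algebra F K]
    (ζ : K) (hζ : IsPrimitiveRoot ζ (p ^ m))
    (hadj : IntermediateField.adjoin F {ζ} = ⊤) :
    (¬ ∃ y : K, algebraMap F K a = y ^ p) ∧
    (p = 2 → ¬ ∃ y : K, algebraMap F K a = -4 * y ^ 4) := by
  have hpk : k + 2 ≤ p * k := by
    rcases eq_or_ne p 2 with rfl | hp2
    · linarith [hk2 rfl]
    · nlinarith [(hp.two_le.lt_of_ne' hp2)]
  have not_pow : ¬ ∃ y : K, algebraMap F K a = y ^ p := by
    rintro ⟨y, hy⟩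
    obtain ⟨z, b, hz⟩ := hζk.exists_pow_eq_algebraMap_pow_mul_pow hp (by omega) hpk hm hnok1 hζ
      hadj (hy ▸ IntermediateField.algebraMap_mem _ a)
    exact hna z b (by rw [zpow_natCast]; exact (algebraMap F K).injective (hy.trans hz))
  refine ⟨not_pow, ?_⟩
  rintro rfl ⟨y, hy⟩
  have hi : (ζk ^ 2 ^ (k - 2)) ^ 2 = -1 := by
    rw [← pow_mul, ← pow_succ]
    refine (hζk.pow (pow_pos two_pos k) ?_).eq_neg_one_of_two_right
    rw [← pow_succ, show k - 2 + 1 + 1 = k by have := hk2 rfl; omega]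
  have hi' : algebraMap F K (ζk ^ 2 ^ (k - 2)) ^ 2 = -1 := by rw [← map_pow, hi, map_neg, map_one]
  exact not_pow ⟨_, hy.trans (neg_four_mul_pow_four_eq_sq_sq hi' y)⟩

theorem stmt_11 (p k : ℕ) (hp : p.Prime) (hk : 1 ≤ k)
    (F : Type*) [Field F] (hchar : (p : F) ≠ 0) (hk2 : p = 2 → 2 ≤ k)
    (ζk : F) (hζk : IsPrimitiveRoot ζk (p ^ k))
    (hnok1 : ¬ ∃ ζ : F, IsPrimitiveRoot ζ (p ^ (k + 1)))
    (a : F) (ha : a ≠ 0)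
    (hna : ∀ (f : F) (b : ℤ), a ≠ f ^ p * ζk ^ b)
    (m : ℕ) (hm : k ≤ m)
    (K : Type*) [Field K] [Algebra F K]
    (ζ : K) (hζ : IsPrimitiveRoot ζ (p ^ m))
    (hadj : IntermediateField.adjoin F {ζ} = ⊤) :
    (¬ ∃ y : K, algebraMap F K a = y ^ p) ∧
    (p = 2 → ¬ ∃ y : K, algebraMap F K a = -4 * y ^ 4) :=
  stmt_11_general p k hp hk F hk2 ζk hζk hnok1 a hna m hm K ζ hζ hadj
end

section
/- Let F be a field of characteristic ≠ p containing ζ_{p^k} but not ζ_{p^{k+1}} (ζ₄ ∈ F if p=2), m ≥ k, and a ∈ F^× with [a] ∉ ⟨[ζ_{p^k}]⟩ in F^×/(F^×)^p. Then the Galois group Gal(F(a^{1/p^m}, ζ_{p^m})/F) is abelian if and only if m ≤ k. -/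
/-!
Write `σ α = ζ ^ c(σ) * α` and `σ ζ = ζ ^ d(σ)` for `σ` in the Galois group of the splitting
field `K` of `X ^ p ^ m - a`. If `m ≤ k`, then `ζ ∈ F` and `σ` is determined by `c(σ)`, which is
additive, so the group is abelian. If `m > k`, then `d(σ) ≡ 1 mod p ^ k` for all `σ` since
`ζ_{p^k} ∈ F`, and `d(τ) - 1 = p ^ k * u` with `u` a unit for some `τ` since `ζ_{p^{k+1}} ∉ F`.
Commutation of `σ` with `τ` reads `(d(σ) - 1) c(τ) = (d(τ) - 1) c(σ)` modulo `p ^ m`, which makes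
`α ^ p ^ k * ζ ^ t` Galois invariant for `t = -c(τ) / u`. Hence it is some `y ∈ F`, and raising
to the power `p ^ (m - k)` exhibits `a` as `(y ^ p ^ (m - k - 1)) ^ p * ζ_{p^k} ^ b`.
-/

open Polynomial IntermediateField

theorem ZMod.exists_isUnit_eq_pow_mul_of_mul_pow_eq_zero {p k m : ℕ} (hp : p.Prime)
    (hkm : k < m) {x : ZMod (p ^ m)} (h0 : x * p ^ (m - k) = 0)
    (h1 : x * p ^ (m - k - 1) ≠ 0) :
    ∃ u : ZMod (p ^ m), IsUnit u ∧ x = p ^ k * u := by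
  have : NeZero (p ^ m) := ⟨pow_ne_zero _ hp.ne_zero⟩
  obtain ⟨v, rfl⟩ : ∃ v : ℕ, (v : ZMod (p ^ m)) = x := ⟨x.val, ZMod.natCast_zmod_val x⟩
  norm_cast at h0 h1
  have hpm : p ^ m = p ^ k * p ^ (m - k) := by rw [← pow_add, Nat.add_sub_cancel' hkm.le]
  rw [ZMod.natCast_eq_zero_iff, hpm] at h0
  rw [ZMod.natCast_eq_zero_iff] at h1
  obtain ⟨w, rfl⟩ := Nat.dvd_of_mul_dvd_mul_right (pow_pos hp.pos _) h0
  refine ⟨w, (ZMod.isUnit_natCast_iff_not_dvd_pow hp (by omega)).mpr ?_, by push_cast; rfl⟩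
  rintro ⟨v, rfl⟩
  have hpm' : p ^ m = p ^ k * p * p ^ (m - k - 1) := by
    rw [← pow_succ, ← pow_add]
    congr 1
    omega
  exact h1 ⟨v, by rw [hpm']; ring⟩

theorem IsPrimitiveRoot.pow_eq_pow_iff_natCast_eq {M : Type*} [CommMonoid M] {ζ : M} {n : ℕ}
    [NeZero n] (hζ : IsPrimitiveRoot ζ n) {i j : ℕ} : ζ ^ i = ζ ^ j ↔ (i : ZMod n) = j := by
  rw [(hζ.isOfFinOrder (NeZero.ne n)).pow_eq_pow_iff_modEq, ← hζ.eq_orderOf,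
    ZMod.natCast_eq_natCast_iff]

section FieldExtension

variable {F K : Type*} [Field F] [Field K] [Algebra F K]

theorem AlgEquiv.eq_of_eqOn_of_adjoin_eq_top {s : Set K} (h : adjoin F s = ⊤)
    {σ τ : K ≃ₐ[F] K} (hs : s.EqOn σ τ) : σ = τ :=
  AlgEquiv.ext fun x ↦ adjoin_induction F (p := fun x _ ↦ σ x = τ x) hs (by simp)
    (fun _ _ _ _ h₁ h₂ ↦ by simp [h₁, h₂]) (fun _ _ h ↦ by simp [h])
    (fun _ _ _ _ h₁ h₂ ↦ by simp [h₁, h₂]) (h ▸ mem_top : x ∈ adjoin F s)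

theorem IsPrimitiveRoot.exists_algebraMap_pow_eq {n : ℕ} [NeZero n] {ζ : F}
    (hζ : IsPrimitiveRoot ζ n) {x : K} (hx : x ^ n = 1) : ∃ i : ℕ, algebraMap F K (ζ ^ i) = x := by
  obtain ⟨i, -, hi⟩ := (hζ.map_of_injective (algebraMap F K).injective).eq_pow_of_pow_eq_one hx
  exact ⟨i, by rw [map_pow, hi]⟩

section RadicalExtension

variable {n : ℕ} {a : F} {ζ α : K}

theorem isSplittingField_X_pow_sub_C_of_adjoin_eq_top (hn : n ≠ 0) (hζ : IsPrimitiveRoot ζ n)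
    (hα0 : α ≠ 0) (hα : α ^ n = algebraMap F K a) (hadj : adjoin F {ζ, α} = ⊤) :
    IsSplittingField F K (X ^ n - C a) := by
  have hroots (i : ℕ) : ζ ^ i * α ∈ (X ^ n - C a).rootSet K := by
    have : (ζ ^ i) ^ n = 1 := by rw [← pow_mul, mul_comm, pow_mul, hζ.pow_eq_one, one_pow]
    rw [mem_rootSet]
    exact ⟨X_pow_sub_C_ne_zero (Nat.pos_of_ne_zero hn) a, by simp [mul_pow, this, hα]⟩
  rw [isSplittingField_iff_intermediateField]
  refine ⟨by simpa using X_pow_sub_C_splits_of_isPrimitiveRoot hζ hα, ?_⟩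
  rw [eq_top_iff, ← hadj, adjoin_le_iff]
  rintro x (rfl | rfl)
  · simpa [hα0] using div_mem (subset_adjoin F _ (hroots 1)) (subset_adjoin F _ (hroots 0))
  · simpa using subset_adjoin F _ (hroots 0)

theorem isGalois_of_adjoin_eq_top (hn : (n : F) ≠ 0) (ha : a ≠ 0) (hζ : IsPrimitiveRoot ζ n)
    (hα0 : α ≠ 0) (hα : α ^ n = algebraMap F K a) (hadj : adjoin F {ζ, α} = ⊤) :
    IsGalois F K :=
  have := isSplittingField_X_pow_sub_C_of_adjoin_eq_top (by rintro rfl; simp at hn) hζ hα0 hα hadj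
  IsGalois.of_separable_splitting_field (separable_X_pow_sub_C a hn ha)

theorem exists_map_eq_pow_mul_self [NeZero n] (hζ : IsPrimitiveRoot ζ n) (hα0 : α ≠ 0)
    (hα : α ^ n = algebraMap F K a) (σ : K ≃ₐ[F] K) : ∃ c : ℕ, σ α = ζ ^ c * α := by
  have : (σ α / α) ^ n = 1 := by
    rw [div_pow, ← map_pow, hα, AlgEquiv.commutes, div_self (hα ▸ pow_ne_zero n hα0)]
  obtain ⟨c, -, hc⟩ := hζ.eq_pow_of_pow_eq_one this
  exact ⟨c, by rw [hc, div_mul_cancel₀ _ hα0]⟩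

theorem IsPrimitiveRoot.map_pow_eq_self_iff [NeZero n] (hζ : IsPrimitiveRoot ζ n)
    {σ : K ≃ₐ[F] K} {d : ℕ} (hd : σ ζ = ζ ^ d) (j : ℕ) :
    σ (ζ ^ j) = ζ ^ j ↔ ((d : ZMod n) - 1) * j = 0 := by
  rw [map_pow, hd, ← pow_mul, hζ.pow_eq_pow_iff_natCast_eq, Nat.cast_mul, sub_one_mul,
    sub_eq_zero]

theorem sub_one_mul_eq_of_commute [NeZero n] (hζ : IsPrimitiveRoot ζ n) (hα0 : α ≠ 0)
    {σ τ : K ≃ₐ[F] K} (hστ : σ * τ = τ * σ) {cσ dσ cτ dτ : ℕ}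
    (hcσ : σ α = ζ ^ cσ * α) (hdσ : σ ζ = ζ ^ dσ) (hcτ : τ α = ζ ^ cτ * α)
    (hdτ : τ ζ = ζ ^ dτ) : ((dσ : ZMod n) - 1) * cτ = ((dτ : ZMod n) - 1) * cσ := by
  have h := congr($hστ α)
  simp only [AlgEquiv.mul_apply, hcσ, hcτ, map_mul, map_pow, hdσ, hdτ, ← pow_mul, ← mul_assoc,
    ← pow_add] at h
  rw [mul_left_inj' hα0, hζ.pow_eq_pow_iff_natCast_eq] at h
  push_cast at h
  linear_combination h

theorem map_pow_mul_pow_eq_self [NeZero n] (hζ : IsPrimitiveRoot ζ n) {σ : K ≃ₐ[F] K}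
    {c d e t : ℕ} (hc : σ α = ζ ^ c * α) (hd : σ ζ = ζ ^ d) (h : (c * e + d * t : ZMod n) = t) :
    σ (α ^ e * ζ ^ t) = α ^ e * ζ ^ t := by
  have : ζ ^ (c * e + d * t) = ζ ^ t := hζ.pow_eq_pow_iff_natCast_eq.mpr (by push_cast; exact h)
  rw [map_mul, map_pow, map_pow, hc, hd, mul_pow, ← pow_mul, ← pow_mul, ← this, pow_add]
  ring

theorem exists_forall_map_pow_mul_pow_eq_self [NeZero n] (hζ : IsPrimitiveRoot ζ n) (hα0 : α ≠ 0)
    (hα : α ^ n = algebraMap F K a) (hcomm : ∀ σ τ : K ≃ₐ[F] K, σ * τ = τ * σ)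
    {τ : K ≃ₐ[F] K} {d e : ℕ} {u : ZMod n} (hd : τ ζ = ζ ^ d) (hu : IsUnit u)
    (hdu : (d : ZMod n) - 1 = e * u) :
    ∃ t : ℕ, ∀ σ : K ≃ₐ[F] K, σ (α ^ e * ζ ^ t) = α ^ e * ζ ^ t := by
  obtain ⟨cτ, hcτ⟩ := exists_map_eq_pow_mul_self hζ hα0 hα τ
  set t : ZMod n := -cτ * ↑hu.unit⁻¹
  have hut : u * t = -cτ := by rw [mul_left_comm, hu.mul_val_inv, mul_one]
  refine ⟨t.val, fun σ ↦ ?_⟩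
  obtain ⟨cσ, hcσ⟩ := exists_map_eq_pow_mul_self hζ hα0 hα σ
  obtain ⟨dσ, hdσ⟩ : ∃ dσ : ℕ, σ ζ = ζ ^ dσ := ⟨_, (hζ.autToPow_spec F σ).symm⟩
  have hrel := sub_one_mul_eq_of_commute hζ hα0 (hcomm σ τ) hcσ hdσ hcτ hd
  refine map_pow_mul_pow_eq_self hζ hcσ hdσ (hu.mul_left_cancel ?_)
  rw [ZMod.natCast_zmod_val]
  linear_combination (dσ - 1 : ZMod n) * hut - hrel - cσ * hdu

theorem mul_comm_of_mem_range_algebraMap [NeZero n] (hζF : ζ ∈ Set.range (algebraMap F K))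
    (hζ : IsPrimitiveRoot ζ n) (hα0 : α ≠ 0) (hα : α ^ n = algebraMap F K a)
    (hadj : adjoin F {ζ, α} = ⊤) (σ τ : K ≃ₐ[F] K) : σ * τ = τ * σ := by
  obtain ⟨cσ, hcσ⟩ := exists_map_eq_pow_mul_self hζ hα0 hα σ
  obtain ⟨cτ, hcτ⟩ := exists_map_eq_pow_mul_self hζ hα0 hα τ
  obtain ⟨z, rfl⟩ := hζF
  refine AlgEquiv.eq_of_eqOn_of_adjoin_eq_top hadj ?_
  rintro x (rfl | rfl)
  · simp
  · simp only [AlgEquiv.mul_apply, hcσ, hcτ, map_mul, map_pow, AlgEquiv.commutes]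
    ring

end RadicalExtension

section PrimePower

variable {p k m : ℕ} {ζk : F} {ζ : K}

theorem exists_map_eq_pow_sub_one_eq_pow_mul_isUnit [IsGalois F K] [FiniteDimensional F K]
    (hp : p.Prime) (hkm : k < m) (hζk : IsPrimitiveRoot ζk (p ^ k))
    (hnok1 : ¬ ∃ ζ : F, IsPrimitiveRoot ζ (p ^ (k + 1))) (hζ : IsPrimitiveRoot ζ (p ^ m)) :
    ∃ τ : K ≃ₐ[F] K, ∃ d : ℕ, ∃ u : ZMod (p ^ m),
      τ ζ = ζ ^ d ∧ IsUnit u ∧ (d : ZMod (p ^ m)) - 1 = p ^ k * u := by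
  have : NeZero p := ⟨hp.ne_zero⟩
  obtain ⟨τ, hτ⟩ : ∃ τ : K ≃ₐ[F] K, τ (ζ ^ p ^ (m - k - 1)) ≠ ζ ^ p ^ (m - k - 1) := by
    by_contra! h
    obtain ⟨z, hz⟩ := (IsGalois.mem_range_algebraMap_iff_fixed _).mpr h
    have hprim : IsPrimitiveRoot (ζ ^ p ^ (m - k - 1)) (p ^ (k + 1)) :=
      hζ.pow (pow_pos hp.pos m) (by rw [← pow_add]; congr 1; omega)
    exact hnok1 ⟨z, (hz ▸ hprim).of_map_of_injective (algebraMap F K).injective⟩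
  have hfix : τ (ζ ^ p ^ (m - k)) = ζ ^ p ^ (m - k) := by
    obtain ⟨i, hi⟩ := hζk.exists_algebraMap_pow_eq (x := ζ ^ p ^ (m - k)) (by
      rw [← pow_mul, ← pow_add, Nat.sub_add_cancel hkm.le, hζ.pow_eq_one])
    rw [← hi, AlgEquiv.commutes]
  have hd := (hζ.autToPow_spec F τ).symm
  rw [hζ.map_pow_eq_self_iff hd, Nat.cast_pow] at hfix
  rw [Ne, hζ.map_pow_eq_self_iff hd, Nat.cast_pow] at hτ
  obtain ⟨u, hu, hdu⟩ := ZMod.exists_isUnit_eq_pow_mul_of_mul_pow_eq_zero hp hkm hfix hτ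
  exact ⟨τ, _, u, hd, hu, hdu⟩

theorem exists_eq_pow_mul_zpow_of_algebraMap_eq [NeZero p] (hkm : k < m)
    (hζk : IsPrimitiveRoot ζk (p ^ k)) (hζ : ζ ^ p ^ m = 1) {α : K} {a : F}
    (hα : α ^ p ^ m = algebraMap F K a) {y : F} {t : ℕ}
    (hy : algebraMap F K y = α ^ p ^ k * ζ ^ t) : ∃ (f : F) (b : ℤ), a = f ^ p * ζk ^ b := by
  obtain ⟨i, hi⟩ := hζk.exists_algebraMap_pow_eq (x := ζ ^ (t * p ^ (m - k))) (by
    rw [← pow_mul, mul_assoc, ← pow_add, Nat.sub_add_cancel hkm.le, pow_mul', hζ, one_pow])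
  have hyp : y ^ p ^ (m - k) = a * ζk ^ i := (algebraMap F K).injective (by
    rw [map_pow, hy, map_mul, hi, mul_pow, ← pow_mul, ← pow_mul, ← pow_add,
      Nat.add_sub_cancel' hkm.le, hα, mul_comm t])
  refine ⟨y ^ p ^ (m - k - 1), -i, ?_⟩
  rw [← pow_mul, ← pow_succ, Nat.sub_add_cancel (by omega), hyp, zpow_neg, zpow_natCast,
    mul_inv_cancel_right₀ (pow_ne_zero _ (hζk.ne_zero (NeZero.ne _)))]

end PrimePower

end FieldExtension

theorem stmt_13_general (p k : ℕ) (hp : p.Prime)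
    (F : Type*) [Field F] (hchar : (p : F) ≠ 0)
    (ζk : F) (hζk : IsPrimitiveRoot ζk (p ^ k))
    (hnok1 : ¬ ∃ ζ : F, IsPrimitiveRoot ζ (p ^ (k + 1)))
    (a : F) (ha : a ≠ 0)
    (hna : ∀ (f : F) (b : ℤ), a ≠ f ^ p * ζk ^ b)
    (m : ℕ)
    (K : Type*) [Field K] [Algebra F K]
    (ζ : K) (hζ : IsPrimitiveRoot ζ (p ^ m))
    (α : K) (hα : α ^ p ^ m = algebraMap F K a)
    (hadj : IntermediateField.adjoin F {ζ, α} = ⊤) :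
    (∀ g h : K ≃ₐ[F] K, g * h = h * g) ↔ m ≤ k := by
  have : NeZero p := ⟨hp.ne_zero⟩
  have hα0 : α ≠ 0 := ne_zero_pow (pow_ne_zero m hp.ne_zero) (by rw [hα]; simpa using ha)
  have := isSplittingField_X_pow_sub_C_of_adjoin_eq_top (NeZero.ne _) hζ hα0 hα hadj
  have := IsSplittingField.finiteDimensional K (X ^ p ^ m - C a)
  have := isGalois_of_adjoin_eq_top (by push_cast; exact pow_ne_zero m hchar) ha hζ hα0 hα hadj
  constructor
  · intro hcomm
    by_contra! hkm
    obtain ⟨τ, d, u, hd, hu, hdu⟩ :=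
      exists_map_eq_pow_sub_one_eq_pow_mul_isUnit hp hkm hζk hnok1 hζ
    obtain ⟨t, ht⟩ :=
      exists_forall_map_pow_mul_pow_eq_self hζ hα0 hα hcomm hd hu (by exact_mod_cast hdu)
    obtain ⟨y, hy⟩ := (IsGalois.mem_range_algebraMap_iff_fixed _).mpr ht
    obtain ⟨f, b, hfb⟩ := exists_eq_pow_mul_zpow_of_algebraMap_eq hkm hζk hζ.pow_eq_one hα hy
    exact hna f b hfb
  · intro hmk
    obtain ⟨i, hi⟩ := hζk.exists_algebraMap_pow_eq (x := ζ)
      ((hζ.pow_eq_one_iff_dvd _).mpr (pow_dvd_pow p hmk))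
    exact mul_comm_of_mem_range_algebraMap ⟨_, hi⟩ hζ hα0 hα hadj

theorem stmt_13 (p k : ℕ) (hp : p.Prime) (hk : 1 ≤ k)
    (F : Type*) [Field F] (hchar : (p : F) ≠ 0) (hk2 : p = 2 → 2 ≤ k)
    (ζk : F) (hζk : IsPrimitiveRoot ζk (p ^ k))
    (hnok1 : ¬ ∃ ζ : F, IsPrimitiveRoot ζ (p ^ (k + 1)))
    (a : F) (ha : a ≠ 0)
    (hna : ∀ (f : F) (b : ℤ), a ≠ f ^ p * ζk ^ b)
    (m : ℕ) (hm : 1 ≤ m)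
    (K : Type*) [Field K] [Algebra F K]
    (ζ : K) (hζ : IsPrimitiveRoot ζ (p ^ m))
    (α : K) (hα : α ^ p ^ m = algebraMap F K a)
    (hadj : IntermediateField.adjoin F {ζ, α} = ⊤) :
    (∀ g h : K ≃ₐ[F] K, g * h = h * g) ↔ m ≤ k :=
  stmt_13_general p k hp F hchar ζk hζk hnok1 a ha hna m K ζ hζ α hα hadj
end

section
/- Let p be an odd prime and k, m positive integers with m ≥ k. Let G = ⟨σ, τ ∣ τ^{p^m} = σ^{p^{m−k}} = 1, στσ⁻¹ = τ^{p^k+1}⟩. Then for each n ≥ 1, the n-th term of the p-Zassenhaus filtration of G equals G^{p^s}, where s is the unique integer with p^{s−1} < n ≤ p^s. -/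
/-- The `p`-Zassenhaus filtration: `G_(1) = G` and
`G_(n) = (G_(⌈n/p⌉))^p ∏_{i+j=n} [G_(i), G_(j)]` (as the subgroup generated by these). -/
noncomputable def zassenhaus (p : ℕ) (hp : 2 ≤ p) (G : Type*) [Group G] (n : ℕ) : Subgroup G :=
  Nat.strongRecOn n (fun n ih =>
    if h : n ≤ 1 then ⊤
    else
      Subgroup.closure ((fun g => g ^ p) ''
        ((ih ((n + p - 1) / p) (by
          have hlt : n + p - 1 < n * p := by
            obtain ⟨a, rfl⟩ : ∃ a, n = a + 2 := ⟨n - 2, by omega⟩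
            obtain ⟨b, rfl⟩ : ∃ b, p = b + 2 := ⟨p - 2, by omega⟩
            have hmul : (a + 2) * (b + 2) = a * b + 2 * a + 2 * b + 4 := by ring
            omega
          exact (Nat.div_lt_iff_lt_mul (by omega)).mpr hlt) : Subgroup G) : Set G)) ⊔
      ⨆ (i : ℕ) (j : ℕ) (hij : i + j = n ∧ 0 < i ∧ 0 < j),
        ⁅ih i (by omega), ih j (by omega)⁆)

/-!
Every element of the group has the form `τ ^ b * σ ^ a`: `σ` normalises `⟨τ⟩`, acting by
`τ ↦ τ ^ u` with `u = p ^ k + 1 ≡ 1 [ZMOD p]`, and has finite order. In these coordinates the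
`p`-th power of `τ ^ b * σ ^ a` is `τ ^ (b * (1 + w + ⋯ + w ^ (p - 1))) * σ ^ (a * p)` with
`w = u ^ a ≡ 1`, so `p` divides the geometric sum; and the commutator of elements with
exponents divisible by `p ^ c` and `p ^ d` is a power of `τ` with exponent divisible by
`p ^ (c + d + 1)`, because `u ^ (p ^ c) ≡ 1 [ZMOD p ^ (c + 1)]`. Hence `G ^ (p ^ s)` is
generated by `σ ^ p ^ s` and `τ ^ p ^ s`, `p`-th powers of `G ^ (p ^ s)` lie in
`G ^ (p ^ (s + 1))`, and `⁅G ^ (p ^ c), G ^ (p ^ d)⁆ ≤ G ^ (p ^ (c + d + 1))`. In any group with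
these two properties, induction on `n` gives `G_(n) = G ^ (p ^ clog p n)`, since
`clog p ⌈n / p⌉ = clog p n - 1` and `clog p (i + j) ≤ clog p i + clog p j + 1`.
-/

open Finset
open scoped commutatorElement

theorem zassenhaus_eq (p : ℕ) (hp : 2 ≤ p) (G : Type*) [Group G] (n : ℕ) :
    zassenhaus p hp G n = if n ≤ 1 then ⊤ else
      Subgroup.closure ((· ^ p) '' (zassenhaus p hp G ((n + p - 1) / p) : Set G)) ⊔
      ⨆ (i : ℕ) (j : ℕ) (_ : i + j = n ∧ 0 < i ∧ 0 < j),
        ⁅zassenhaus p hp G i, zassenhaus p hp G j⁆ := by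
  rw [zassenhaus, Nat.strongRecOn_eq]
  rfl

namespace Nat

theorem clog_add_le {b : ℕ} (hb : 1 < b) (i j : ℕ) :
    clog b (i + j) ≤ clog b i + clog b j + 1 := by
  apply clog_le_of_le_pow
  set c := max (clog b i) (clog b j)
  calc i + j ≤ b ^ clog b i + b ^ clog b j := add_le_add (le_pow_clog hb i) (le_pow_clog hb j)
    _ ≤ b ^ c + b ^ c := by gcongr <;> omega
    _ ≤ b ^ (c + 1) := by rw [pow_succ, ← two_mul, mul_comm]; exact Nat.mul_le_mul_left _ hb
    _ ≤ b ^ (clog b i + clog b j + 1) := Nat.pow_le_pow_right (by omega) (by omega)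

theorem clog_eq_of_le_pow {b n s : ℕ} (hb : 1 < b) (hn : n ≤ b ^ s)
    (hs : s = 0 ∨ b ^ (s - 1) < n) : clog b n = s := by
  refine le_antisymm (clog_le_of_le_pow hn) ?_
  rcases hs with rfl | hs
  · exact zero_le _
  · have := (lt_clog_iff_pow_lt hb).2 hs
    omega

end Nat

def powerSubgroup (G : Type*) [Group G] (n : ℕ) : Subgroup G :=
  Subgroup.closure {x | ∃ g : G, g ^ n = x}

section PowerSubgroup

variable {G : Type*} [Group G]

theorem pow_mem_powerSubgroup (g : G) (n : ℕ) : g ^ n ∈ powerSubgroup G n :=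
  Subgroup.subset_closure ⟨g, rfl⟩

theorem zpow_mem_powerSubgroup {n : ℕ} {z : ℤ} (hz : (n : ℤ) ∣ z) (g : G) :
    g ^ z ∈ powerSubgroup G n := by
  obtain ⟨w, rfl⟩ := hz
  rw [zpow_mul, zpow_natCast]
  exact zpow_mem (pow_mem_powerSubgroup g n) w

theorem powerSubgroup_one : powerSubgroup G 1 = ⊤ :=
  eq_top_iff.2 fun g _ => by simpa using pow_mem_powerSubgroup g 1

theorem powerSubgroup_le_of_dvd {m n : ℕ} (h : m ∣ n) :
    powerSubgroup G n ≤ powerSubgroup G m := by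
  obtain ⟨c, rfl⟩ := h
  rw [powerSubgroup, Subgroup.closure_le]
  rintro _ ⟨g, rfl⟩
  rw [pow_mul']
  exact pow_mem_powerSubgroup _ _

theorem closure_image_pow_powerSubgroup {p s : ℕ}
    (hpow : ∀ x ∈ powerSubgroup G (p ^ s), x ^ p ∈ powerSubgroup G (p ^ (s + 1))) :
    Subgroup.closure ((· ^ p) '' (powerSubgroup G (p ^ s) : Set G)) =
      powerSubgroup G (p ^ (s + 1)) := by
  apply le_antisymm
  · rw [Subgroup.closure_le]
    rintro _ ⟨x, hx, rfl⟩
    exact hpow x hx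
  · rw [powerSubgroup, Subgroup.closure_le]
    rintro _ ⟨g, rfl⟩
    refine Subgroup.subset_closure ⟨g ^ p ^ s, pow_mem_powerSubgroup g _, ?_⟩
    simp only [← pow_mul, pow_succ]

theorem zassenhaus_eq_powerSubgroup_clog {p : ℕ} (hp : 2 ≤ p)
    (hpow : ∀ s, ∀ x ∈ powerSubgroup G (p ^ s), x ^ p ∈ powerSubgroup G (p ^ (s + 1)))
    (hcomm : ∀ c d,
      ⁅powerSubgroup G (p ^ c), powerSubgroup G (p ^ d)⁆ ≤ powerSubgroup G (p ^ (c + d + 1)))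
    {n : ℕ} (hn : 1 ≤ n) : zassenhaus p hp G n = powerSubgroup G (p ^ Nat.clog p n) := by
  induction n using Nat.strong_induction_on with
  | _ n ih =>
  rw [zassenhaus_eq]
  split_ifs with h1
  · obtain rfl : n = 1 := by omega
    simp [powerSubgroup_one]
  have hn' : 1 ≤ (n + p - 1) / p := (Nat.one_le_div_iff (by omega)).2 (by omega)
  have hlt : (n + p - 1) / p < n := (Nat.div_lt_iff_lt_mul (by omega)).2 (by
    have : n + p ≤ n * p := by nlinarith
    omega)
  rw [ih _ hlt hn', closure_image_pow_powerSubgroup (hpow _),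
    ← Nat.clog_of_two_le (by omega) (by omega)]
  refine sup_eq_left.2 (iSup₂_le fun i j => iSup_le fun ⟨hij, hi, hj⟩ => ?_)
  rw [ih i (by omega) hi, ih j (by omega) hj]
  refine (hcomm _ _).trans (powerSubgroup_le_of_dvd (pow_dvd_pow p ?_))
  exact hij ▸ Nat.clog_add_le (by omega) i j

end PowerSubgroup

section Metacyclic

variable {G : Type*} [Group G] {σ τ : G} {u : ℤ}

theorem SemiconjBy.pow_zpow_of_zpow (h : SemiconjBy σ τ (τ ^ u)) (a : ℕ) (b : ℤ) :
    SemiconjBy (σ ^ a) (τ ^ b) (τ ^ (u ^ a * b)) := by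
  induction a generalizing b with
  | zero => simp
  | succ a ih =>
    have hstep : SemiconjBy σ (τ ^ b) (τ ^ (u * b)) := by simpa [zpow_mul] using h.zpow_right b
    rw [pow_succ, pow_succ, mul_assoc]
    exact (ih (u * b)).mul_left hstep

theorem zpow_mul_pow_mul_zpow_mul_pow (h : SemiconjBy σ τ (τ ^ u)) (a c : ℕ) (b d : ℤ) :
    τ ^ b * σ ^ a * (τ ^ d * σ ^ c) = τ ^ (b + u ^ a * d) * σ ^ (a + c) := by
  rw [mul_assoc, ← mul_assoc (σ ^ a), (h.pow_zpow_of_zpow a d).eq, zpow_add, pow_add]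
  group

theorem zpow_mul_pow_pow (h : SemiconjBy σ τ (τ ^ u)) (a : ℕ) (b : ℤ) (n : ℕ) :
    (τ ^ b * σ ^ a) ^ n = τ ^ (b * ∑ i ∈ range n, (u ^ a) ^ i) * σ ^ (a * n) := by
  induction n with
  | zero => simp
  | succ n ih =>
    rw [pow_succ', ih, zpow_mul_pow_mul_zpow_mul_pow h, geom_sum_succ]
    congr 2 <;> ring

theorem commutatorElement_zpow_mul_pow (h : SemiconjBy σ τ (τ ^ u)) (a c : ℕ) (b d : ℤ) :
    ⁅τ ^ b * σ ^ a, τ ^ d * σ ^ c⁆ = τ ^ ((u ^ a - 1) * d - (u ^ c - 1) * b) := by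
  calc ⁅τ ^ b * σ ^ a, τ ^ d * σ ^ c⁆
      = τ ^ b * σ ^ a * (τ ^ d * σ ^ c) * (τ ^ d * σ ^ c * (τ ^ b * σ ^ a))⁻¹ := by
        rw [commutatorElement_def]; group
    _ = τ ^ (b + u ^ a * d) * τ ^ (-(d + u ^ c * b)) := by
        rw [zpow_mul_pow_mul_zpow_mul_pow h, zpow_mul_pow_mul_zpow_mul_pow h, add_comm c a]; group
    _ = τ ^ ((u ^ a - 1) * d - (u ^ c - 1) * b) := by rw [← zpow_add]; ring_nf

theorem exists_eq_zpow_mul_pow_of_mem_closure (h : SemiconjBy σ τ (τ ^ u)) (hσ : IsOfFinOrder σ)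
    {g : G} (hg : g ∈ Subgroup.closure {σ, τ}) : ∃ (a : ℕ) (b : ℤ), g = τ ^ b * σ ^ a := by
  induction hg using Subgroup.closure_induction with
  | mem x hx =>
    rcases hx with rfl | rfl
    exacts [⟨1, 0, by simp⟩, ⟨0, 1, by simp⟩]
  | one => exact ⟨0, 0, by simp⟩
  | mul x y _ _ hx hy =>
    obtain ⟨a, b, rfl⟩ := hx
    obtain ⟨c, d, rfl⟩ := hy
    exact ⟨_, _, zpow_mul_pow_mul_zpow_mul_pow h a c b d⟩
  | inv x _ hx =>
    obtain ⟨a, b, rfl⟩ := hx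
    obtain ⟨a', ha'⟩ := hσ.mem_powers_iff_mem_zpowers.2
      (inv_mem (pow_mem (Subgroup.mem_zpowers σ) a))
    refine ⟨a', u ^ a' * -b, ?_⟩
    rw [mul_inv_rev, ← ha', ← zpow_neg, (h.pow_zpow_of_zpow a' (-b)).eq]

end Metacyclic

theorem dvd_geom_sum_of_dvd_sub_one {R : Type*} [CommRing R] {p : ℕ} {x : R}
    (h : (p : R) ∣ x - 1) : (p : R) ∣ ∑ i ∈ range p, x ^ i := by
  simpa using dvd_geom_sum₂_self (y := 1) h

theorem pow_dvd_pow_pow_mul_sub_one {p : ℕ} {u : ℤ} (hu : (p : ℤ) ∣ u - 1) (c a : ℕ) :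
    (p : ℤ) ^ (c + 1) ∣ u ^ (p ^ c * a) - 1 := by
  have h := dvd_sub_pow_of_dvd_sub hu c
  rw [one_pow] at h
  rw [pow_mul]
  exact h.trans (sub_one_dvd_pow_sub_one _ a)

section PowerfulMetacyclic

variable {G : Type*} [Group G] {σ τ : G} {u : ℤ} {p : ℕ}

theorem exists_eq_zpow_mul_pow_of_mem_closure_pow (h : SemiconjBy σ τ (τ ^ u))
    (hσ : IsOfFinOrder σ) (s : ℕ) {g : G} (hg : g ∈ Subgroup.closure {σ ^ p ^ s, τ ^ p ^ s}) :
    ∃ (a : ℕ) (b : ℤ), g = τ ^ ((p : ℤ) ^ s * b) * σ ^ (p ^ s * a) := by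
  have h' : SemiconjBy (σ ^ p ^ s) (τ ^ p ^ s) ((τ ^ p ^ s) ^ (u ^ p ^ s)) := by
    simpa [← zpow_natCast, ← zpow_mul, mul_comm] using h.pow_zpow_of_zpow (p ^ s) (p ^ s)
  obtain ⟨a, b, rfl⟩ := exists_eq_zpow_mul_pow_of_mem_closure h' hσ.pow hg
  exact ⟨a, b, by rw [pow_mul, zpow_mul]; norm_cast⟩

theorem pow_mem_closure_pow_succ (h : SemiconjBy σ τ (τ ^ u)) (hσ : IsOfFinOrder σ)
    (hu : (p : ℤ) ∣ u - 1) {s : ℕ} {x : G} (hx : x ∈ Subgroup.closure {σ ^ p ^ s, τ ^ p ^ s}) :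
    x ^ p ∈ Subgroup.closure {σ ^ p ^ (s + 1), τ ^ p ^ (s + 1)} := by
  obtain ⟨a, b, rfl⟩ := exists_eq_zpow_mul_pow_of_mem_closure_pow h hσ s hx
  obtain ⟨c, hc⟩ := dvd_geom_sum_of_dvd_sub_one (hu.trans (sub_one_dvd_pow_sub_one u (p ^ s * a)))
  have hτ : τ ^ ((p : ℤ) ^ s * b * (p * c)) = (τ ^ p ^ (s + 1)) ^ (b * c) := by
    rw [← zpow_natCast, ← zpow_mul]; push_cast; ring_nf
  have hσ' : σ ^ (p ^ s * a * p) = (σ ^ p ^ (s + 1)) ^ a := by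
    rw [← pow_mul]; ring_nf
  rw [zpow_mul_pow_pow h, hc, hτ, hσ']
  exact mul_mem (zpow_mem (Subgroup.subset_closure (by simp)) _)
    (pow_mem (Subgroup.subset_closure (by simp)) _)

variable (h : SemiconjBy σ τ (τ ^ u)) (hσ : IsOfFinOrder σ) (hu : (p : ℤ) ∣ u - 1)
  (hgen : Subgroup.closure {σ, τ} = ⊤)
include h hσ hu hgen

theorem powerSubgroup_eq_closure_pow (s : ℕ) :
    powerSubgroup G (p ^ s) = Subgroup.closure {σ ^ p ^ s, τ ^ p ^ s} := by
  refine le_antisymm ?_ (Subgroup.closure_le _ |>.2 ?_)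
  · induction s with
    | zero => simp only [pow_zero, pow_one, powerSubgroup_one, hgen, le_refl]
    | succ s ih =>
      rw [powerSubgroup, Subgroup.closure_le]
      rintro _ ⟨g, rfl⟩
      have hg : g ^ p ^ (s + 1) = (g ^ p ^ s) ^ p := by rw [← pow_mul, pow_succ]
      exact hg ▸ pow_mem_closure_pow_succ h hσ hu (ih (pow_mem_powerSubgroup g _))
  · rw [Set.insert_subset_iff, Set.singleton_subset_iff]
    exact ⟨pow_mem_powerSubgroup _ _, pow_mem_powerSubgroup _ _⟩

theorem pow_mem_powerSubgroup_pow_succ {s : ℕ} {x : G} (hx : x ∈ powerSubgroup G (p ^ s)) :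
    x ^ p ∈ powerSubgroup G (p ^ (s + 1)) := by
  rw [powerSubgroup_eq_closure_pow h hσ hu hgen] at hx ⊢
  exact pow_mem_closure_pow_succ h hσ hu hx

theorem commutator_powerSubgroup_pow_le (c d : ℕ) :
    ⁅powerSubgroup G (p ^ c), powerSubgroup G (p ^ d)⁆ ≤ powerSubgroup G (p ^ (c + d + 1)) := by
  rw [Subgroup.commutator_le]
  intro x hx y hy
  rw [powerSubgroup_eq_closure_pow h hσ hu hgen] at hx hy
  obtain ⟨a, b, rfl⟩ := exists_eq_zpow_mul_pow_of_mem_closure_pow h hσ c hx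
  obtain ⟨a', b', rfl⟩ := exists_eq_zpow_mul_pow_of_mem_closure_pow h hσ d hy
  rw [commutatorElement_zpow_mul_pow h]
  refine zpow_mem_powerSubgroup (dvd_sub ?_ ?_) τ
  · rw [Nat.cast_pow, show c + d + 1 = (c + 1) + d by ring, pow_add]
    exact mul_dvd_mul (pow_dvd_pow_pow_mul_sub_one hu c a) (dvd_mul_right _ _)
  · rw [Nat.cast_pow, show c + d + 1 = (d + 1) + c by ring, pow_add]
    exact mul_dvd_mul (pow_dvd_pow_pow_mul_sub_one hu d a') (dvd_mul_right _ _)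

theorem zassenhaus_eq_powerSubgroup_clog_of_semiconjBy (hp : 2 ≤ p) {n : ℕ} (hn : 1 ≤ n) :
    zassenhaus p hp G n = powerSubgroup G (p ^ Nat.clog p n) :=
  zassenhaus_eq_powerSubgroup_clog hp (fun _ _ => pow_mem_powerSubgroup_pow_succ h hσ hu hgen)
    (commutator_powerSubgroup_pow_le h hσ hu hgen) hn

end PowerfulMetacyclic

theorem demushkin_semiconjBy (p m k : ℕ) :
    SemiconjBy (PresentedGroup.of true : PresentedGroup (demushkinRels p m k))
      (PresentedGroup.of false) (PresentedGroup.of false ^ ((p ^ k + 1 : ℕ) : ℤ)) := by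
  have h := PresentedGroup.one_of_mem (rels := demushkinRels p m k)
    (x := .of true * .of false * (.of true)⁻¹ * (.of false ^ (p ^ k + 1))⁻¹)
    (by simp [demushkinRels])
  simp only [map_mul, map_inv, map_pow] at h
  rw [mul_inv_eq_one, mul_inv_eq_iff_eq_mul] at h
  rwa [SemiconjBy, zpow_natCast]

theorem demushkin_isOfFinOrder {p : ℕ} (hp : p ≠ 0) (m k : ℕ) :
    IsOfFinOrder (PresentedGroup.of true : PresentedGroup (demushkinRels p m k)) := by
  refine isOfFinOrder_iff_pow_eq_one.2 ⟨p ^ (m - k), by positivity, ?_⟩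
  have h := PresentedGroup.one_of_mem (rels := demushkinRels p m k)
    (x := .of true ^ p ^ (m - k)) (by simp [demushkinRels])
  rwa [map_pow] at h

theorem demushkin_closure_eq_top (p m k : ℕ) :
    Subgroup.closure {PresentedGroup.of true, PresentedGroup.of false} =
      (⊤ : Subgroup (PresentedGroup (demushkinRels p m k))) := by
  rw [← PresentedGroup.closure_range_of]
  congr
  ext
  simp [or_comm]

theorem stmt_14_general (p m k : ℕ) (hp : p.Prime) (hk : 1 ≤ k) :
    ∀ n s : ℕ, 1 ≤ n → n ≤ p ^ s → (s = 0 ∨ p ^ (s - 1) < n) →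
      zassenhaus p hp.two_le (PresentedGroup (demushkinRels p m k)) n =
        Subgroup.closure
          {x : PresentedGroup (demushkinRels p m k) | ∃ g, g ^ p ^ s = x} := by
  intro n s hn hns hs
  have hu : (p : ℤ) ∣ ((p ^ k + 1 : ℕ) : ℤ) - 1 := by
    push_cast
    simpa using dvd_pow_self (p : ℤ) (by omega)
  rw [zassenhaus_eq_powerSubgroup_clog_of_semiconjBy (demushkin_semiconjBy p m k)
    (demushkin_isOfFinOrder hp.ne_zero m k) hu (demushkin_closure_eq_top p m k) hp.two_le hn,
    Nat.clog_eq_of_le_pow hp.one_lt hns hs]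
  rfl

theorem stmt_14 (p m k : ℕ) (hp : p.Prime) (hpodd : Odd p) (hk : 1 ≤ k) (hmk : k ≤ m) :
    ∀ n s : ℕ, 1 ≤ n → n ≤ p ^ s → (s = 0 ∨ p ^ (s - 1) < n) →
      zassenhaus p hp.two_le (PresentedGroup (demushkinRels p m k)) n =
        Subgroup.closure
          {x : PresentedGroup (demushkinRels p m k) | ∃ g, g ^ p ^ s = x} :=
  stmt_14_general p m k hp hk
end
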